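/- Let X be a Banach space, ū ∈ X, ρ > 0, and F : B̄_ρ(ū) → Y an operator. Define N_ū(z) = F(ū+z) - F(ū) - DF(ū)z. Let B be a linear operator such that B∘DF(ū), B∘F and B∘N_ū are continuous. Suppose: (a) ‖I - B DF(ū)‖ = α < 1; (b) ‖B(F(ū) + N_ū(z))‖ ≤ b whenever ‖z‖ ≤ ρ; (c) the Lipschitz constant of z ↦ B N_ū(z) on {‖z‖ ≤ ρ} is less than K; (d) b/(1-α) < ρ; (e) K/(1-α) < 1. Then there exists a unique δu with ‖δu‖ ≤ ρ such that B F(ū + δu) = 0, and moreover ‖δu‖ ≤ ‖B F(ū)‖/(1 - α - K). -/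

import Mathlib

/-!
Writing `L = I - B DF(ū)`, the Newton-like map `T z = z - B F(ū + z)` splits as
`T z = L z - B (F(ū) + N_ū(z))`. Hypotheses (a), (b), (d) make `T` map the closed ball of radius `ρ`
into itself, and (a), (c), (e) make it a contraction there with constant `α + K < 1`. Its fixed points
are exactly the zeros of `z ↦ B F(ū + z)`, so the Banach fixed point theorem gives existence and
uniqueness, and its a priori estimate started at `0`, where `T 0 = -B F(ū)`, gives the bound.
-/

open Set Function Metric
open scoped NNReal

theorem exists_isFixedPt_of_mapsTo_of_lipschitzOnWith {E : Type*} [MetricSpace E] {s : Set E}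
    (hs : IsComplete s) {T : E → E} {q : ℝ≥0} (hq : q < 1) (hT : MapsTo T s s)
    (hL : LipschitzOnWith q T s) {x : E} (hx : x ∈ s) :
    ∃ z ∈ s, IsFixedPt T z ∧ dist x z ≤ dist x (T x) / (1 - q) ∧
      ∀ z' ∈ s, IsFixedPt T z' → z' = z := by
  have := hs.completeSpace_coe
  have : Nonempty s := ⟨⟨x, hx⟩⟩
  have hf : ContractingWith q (hT.restrict T s s) := ⟨hq, hL.mapsToRestrict hT⟩
  exact ⟨_, (ContractingWith.fixedPoint _ hf).2,
    congrArg Subtype.val (ContractingWith.fixedPoint_isFixedPt hf),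
    hf.dist_fixedPoint_le ⟨x, hx⟩,
    fun z' hz' hfix =>
      congrArg Subtype.val (hf.fixedPoint_unique (x := ⟨z', hz'⟩) (Subtype.ext hfix))⟩

section NewtonLike

variable {X Y : Type*} [NormedAddCommGroup X] [NormedSpace ℝ X]
  [NormedAddCommGroup Y] [NormedSpace ℝ Y]

def newtonLikeMap (B : Y →L[ℝ] X) (F : X → Y) (ubar : X) (z : X) : X :=
  z - B (F (ubar + z))

variable {B : Y →L[ℝ] X} {F : X → Y} {ubar : X}

theorem isFixedPt_newtonLikeMap_iff {z : X} :
    IsFixedPt (newtonLikeMap B F ubar) z ↔ B (F (ubar + z)) = 0 :=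
  sub_eq_self

variable {F' : X →L[ℝ] Y} {Nbar : X → Y}

theorem newtonLikeMap_eq (hN : ∀ z, Nbar z = F (ubar + z) - F ubar - F' z) (z : X) :
    newtonLikeMap B F ubar z = (ContinuousLinearMap.id ℝ X - B.comp F') z - B (F ubar + Nbar z) := by
  simp only [newtonLikeMap, hN, sub_apply, ContinuousLinearMap.id_apply,
    ContinuousLinearMap.comp_apply, map_sub, map_add]
  abel

theorem norm_newtonLikeMap_le (hN : ∀ z, Nbar z = F (ubar + z) - F ubar - F' z) (z : X) :
    ‖newtonLikeMap B F ubar z‖ ≤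
      ‖ContinuousLinearMap.id ℝ X - B.comp F'‖ * ‖z‖ + ‖B (F ubar + Nbar z)‖ := by
  rw [newtonLikeMap_eq hN]
  exact (norm_sub_le _ _).trans (add_le_add_left (ContinuousLinearMap.le_opNorm _ _) _)

theorem norm_newtonLikeMap_sub_le (hN : ∀ z, Nbar z = F (ubar + z) - F ubar - F' z) (z₁ z₂ : X) :
    ‖newtonLikeMap B F ubar z₁ - newtonLikeMap B F ubar z₂‖ ≤
      ‖ContinuousLinearMap.id ℝ X - B.comp F'‖ * ‖z₁ - z₂‖ + ‖B (Nbar z₁) - B (Nbar z₂)‖ := by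
  have hsplit : newtonLikeMap B F ubar z₁ - newtonLikeMap B F ubar z₂ =
      (ContinuousLinearMap.id ℝ X - B.comp F') (z₁ - z₂) - (B (Nbar z₁) - B (Nbar z₂)) := by
    rw [newtonLikeMap_eq hN, newtonLikeMap_eq hN, map_sub, map_add, map_add]
    abel
  rw [hsplit]
  exact (norm_sub_le _ _).trans (add_le_add_left (ContinuousLinearMap.le_opNorm _ _) _)

end NewtonLike

theorem contraction_with_preconditioning_general
    {X Y : Type*} [NormedAddCommGroup X] [NormedSpace ℝ X] [CompleteSpace X]
    [NormedAddCommGroup Y] [NormedSpace ℝ Y]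
    (F : X → Y) (ubar : X) (ρ : ℝ) (hρ : 0 < ρ)
    (F' : X →L[ℝ] Y)
    (B : Y →L[ℝ] X)
    (Nbar : X → Y) (hN : ∀ z, Nbar z = F (ubar + z) - F ubar - F' z)
    (α b K : ℝ)
    (ha : ‖ContinuousLinearMap.id ℝ X - B.comp F'‖ = α) (hα : α < 1)
    (hb : ∀ z : X, ‖z‖ ≤ ρ → ‖B (F ubar + Nbar z)‖ ≤ b)
    (hK : ∀ z₁ z₂ : X, ‖z₁‖ ≤ ρ → ‖z₂‖ ≤ ρ →
      ‖B (Nbar z₁) - B (Nbar z₂)‖ ≤ K * ‖z₁ - z₂‖)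
    (hKpos : 0 ≤ K)
    (hd : b / (1 - α) < ρ)
    (he : K / (1 - α) < 1) :
    ∃ δu : X, ‖δu‖ ≤ ρ ∧ B (F (ubar + δu)) = 0 ∧
      ‖δu‖ ≤ ‖B (F ubar)‖ / (1 - α - K) ∧
      ∀ δu' : X, ‖δu'‖ ≤ ρ → B (F (ubar + δu')) = 0 → δu' = δu := by
  have h1α : 0 < 1 - α := by linarith
  have hα0 : 0 ≤ α := ha ▸ norm_nonneg _
  have hbρ : b < (1 - α) * ρ := by rw [div_lt_iff₀ h1α] at hd; linarith
  have hαK : α + K < 1 := by rw [div_lt_one h1α] at he; linarith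
  set T := newtonLikeMap B F ubar
  have hmaps : MapsTo T (closedBall 0 ρ) (closedBall 0 ρ) := fun z hz => by
    rw [mem_closedBall_zero_iff] at hz ⊢
    have hTz := norm_newtonLikeMap_le (B := B) hN z
    rw [ha] at hTz
    nlinarith [hb z hz]
  have hlip : LipschitzOnWith (α + K).toNNReal T (closedBall 0 ρ) :=
    LipschitzOnWith.of_dist_le' fun z₁ hz₁ z₂ hz₂ => by
      rw [mem_closedBall_zero_iff] at hz₁ hz₂
      rw [dist_eq_norm, dist_eq_norm, add_mul, ← ha]
      exact (norm_newtonLikeMap_sub_le (B := B) hN z₁ z₂).trans (add_le_add_right (hK z₁ z₂ hz₁ hz₂) _)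
  have hq : (α + K).toNNReal < 1 := by rwa [Real.toNNReal_lt_one]
  obtain ⟨δu, hδu, hfix, hdist, huniq⟩ := exists_isFixedPt_of_mapsTo_of_lipschitzOnWith
    isClosed_closedBall.isComplete hq hmaps hlip (mem_closedBall_self hρ.le)
  rw [Real.coe_toNNReal _ (by linarith), dist_zero_left, dist_zero_left] at hdist
  refine ⟨δu, mem_closedBall_zero_iff.mp hδu, isFixedPt_newtonLikeMap_iff.mp hfix, ?_,
    fun δu' hδu' hzero => huniq δu' (mem_closedBall_zero_iff.mpr hδu')
      (isFixedPt_newtonLikeMap_iff.mpr hzero)⟩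
  simpa [T, newtonLikeMap, sub_sub] using hdist

/-- Theorem 2.2 (contraction with preconditioning):
existence of a unique zero of B ∘ F in the closed ball of radius ρ around ū. -/
theorem contraction_with_preconditioning
    {X Y : Type*} [NormedAddCommGroup X] [NormedSpace ℝ X] [CompleteSpace X]
    [NormedAddCommGroup Y] [NormedSpace ℝ Y]
    (F : X → Y) (ubar : X) (ρ : ℝ) (hρ : 0 < ρ)
    (F' : X →L[ℝ] Y) (hF' : HasFDerivAt F F' ubar)
    (B : Y →L[ℝ] X)
    (Nbar : X → Y) (hN : ∀ z, Nbar z = F (ubar + z) - F ubar - F' z)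
    (α b K : ℝ)
    (ha : ‖ContinuousLinearMap.id ℝ X - B.comp F'‖ = α) (hα : α < 1)
    (hb : ∀ z : X, ‖z‖ ≤ ρ → ‖B (F ubar + Nbar z)‖ ≤ b)
    (hK : ∀ z₁ z₂ : X, ‖z₁‖ ≤ ρ → ‖z₂‖ ≤ ρ →
      ‖B (Nbar z₁) - B (Nbar z₂)‖ ≤ K * ‖z₁ - z₂‖)
    (hKpos : 0 ≤ K)
    (hd : b / (1 - α) < ρ)
    (he : K / (1 - α) < 1) :
    ∃ δu : X, ‖δu‖ ≤ ρ ∧ B (F (ubar + δu)) = 0 ∧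
      ‖δu‖ ≤ ‖B (F ubar)‖ / (1 - α - K) ∧
      ∀ δu' : X, ‖δu'‖ ≤ ρ → B (F (ubar + δu')) = 0 → δu' = δu :=
  contraction_with_preconditioning_general F ubar ρ hρ F' B Nbar hN α b K ha hα hb hK hKpos hd he
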